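/- Let (𝒵, 𝒟) be a probability space and ℓ : ℝ^p × 𝒵 → ℝ a measurable loss such that for every z the map w ↦ ℓ(w; z) is G-Lipschitz and L-smooth. Define R(w) = E_{Z∼𝒟}[ℓ(w; Z)]. Fix a center w₀ ∈ ℝ^p, b ≥ 1, 0 < η < 1/L, and ε with 0 ≤ ε ≤ G²η/(8b²). Let B = (Z₁,…,Z_b) be an i.i.d. sample from 𝒟, let R_B(w) = (1/b)∑_{i=1}^b ℓ(w; Z_i), and let w_B be a measurable selection of ε-inexact minimizers of w ↦ R_B(w) + ‖w − w₀‖²/(2η). Then E_B[‖∇R(w_B) − E_B[∇R(w_B)]‖²] ≤ 25L²G²η²/((1 − ηL)²·b). -/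

import Mathlib

/-!
Let `w̄` be the proximal point of the population risk, i.e. the fixed point of the contraction
`w ↦ w₀ - η ∇R(w)` (Lipschitz constant `ηL < 1`), and `c = ∇R(w̄)`. The minibatch objective `Q_B`
is `m`-strongly convex with `m = 1/η - L`, so an `ε`-minimizer satisfies
`‖w_B - w̄‖² ≤ 4‖∇Q_B(w̄)‖²/m² + 4ε/m`. By the choice of `w̄`, `∇Q_B(w̄)` is the mean of the `b`
i.i.d. centred vectors `∇ℓ(w̄; Z_i) - c`, so its second moment is at most `G²/b`. The variance of
`∇R(w_B)` is at most its second moment about `c`, which the `L`-Lipschitz continuity of `∇R`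
bounds by `L²(4G²/(m²b) + 4ε/m)`; the constraint on `ε` turns this into the stated bound.
-/

open MeasureTheory ProbabilityTheory Finset InnerProductSpace
open scoped RealInnerProductSpace

section ProximalPoint

variable {E : Type*} [NormedAddCommGroup E] [InnerProductSpace ℝ E]

theorem strongly_monotone_add_smul_sub {g : E → E} {L : ℝ}
    (hg : ∀ x y, ‖g x - g y‖ ≤ L * ‖x - y‖) (c : ℝ) (w0 x y : E) :
    (c - L) * ‖x - y‖ ^ 2 ≤ ⟪(g x + c • (x - w0)) - (g y + c • (y - w0)), x - y⟫ := by
  have hsplit : (g x + c • (x - w0)) - (g y + c • (y - w0)) = (g x - g y) + c • (x - y) := by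
    module
  rw [hsplit, inner_add_left, real_inner_smul_left, real_inner_self_eq_norm_sq]
  have hCS := neg_le_of_abs_le (abs_real_inner_le_norm (g x - g y) (x - y))
  nlinarith [mul_le_mul_of_nonneg_right (hg x y) (norm_nonneg (x - y))]

theorem norm_inv_smul_sum_le {n : ℕ} (hn : 0 < n) {u : Fin n → E} {C : ℝ}
    (h : ∀ i, ‖u i‖ ≤ C) : ‖(n : ℝ)⁻¹ • ∑ i, u i‖ ≤ C := by
  rw [norm_smul, norm_inv, Real.norm_natCast, inv_mul_le_iff₀ (by positivity)]
  simpa using norm_sum_le_of_le univ fun i _ => h i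

variable [CompleteSpace E]

theorem lower_bound_of_strongly_monotone_gradient {f : E → ℝ} {g : E → E} {m : ℝ}
    (hf : ∀ x, HasGradientAt f (g x) x) (hg : ∀ x y, m * ‖x - y‖ ^ 2 ≤ ⟪g x - g y, x - y⟫)
    (x y : E) : f x + ⟪g x, y - x⟫ + m / 2 * ‖y - x‖ ^ 2 ≤ f y := by
  set d := y - x
  set φ : ℝ → ℝ := fun t => f (x + t • d) - t * ⟪g x, d⟫ - m / 2 * t ^ 2 * ‖d‖ ^ 2
  have hφ (t : ℝ) : HasDerivAt φ (⟪g (x + t • d), d⟫ - ⟪g x, d⟫ - m * t * ‖d‖ ^ 2) t := by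
    have hline : HasDerivAt (fun t : ℝ => x + t • d) d t := by
      simpa using ((hasDerivAt_id t).smul_const d).const_add x
    have hf' := (hasGradientAt_iff_hasFDerivAt.mp (hf (x + t • d))).comp_hasDerivAt t hline
    rw [toDual_apply_apply] at hf'
    refine ((hf'.sub ((hasDerivAt_id t).mul_const ⟪g x, d⟫)).sub
      (((hasDerivAt_pow 2 t).const_mul (m / 2)).mul_const (‖d‖ ^ 2))).congr_deriv ?_
    ring
  have hφ'_nonneg (t : ℝ) (ht : 0 < t) :
      0 ≤ ⟪g (x + t • d), d⟫ - ⟪g x, d⟫ - m * t * ‖d‖ ^ 2 := by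
    have h := hg (x + t • d) x
    rw [add_sub_cancel_left, real_inner_smul_right, norm_smul, Real.norm_of_nonneg ht.le,
      inner_sub_left] at h
    nlinarith
  have hmono : MonotoneOn φ (Set.Ici 0) :=
    monotoneOn_of_hasDerivWithinAt_nonneg (convex_Ici 0)
      (fun t _ => (hφ t).continuousAt.continuousWithinAt)
      (fun t _ => (hφ t).hasDerivWithinAt) fun t ht => hφ'_nonneg t (by simpa using ht)
  have h01 := hmono Set.self_mem_Ici (by simp : (1 : ℝ) ∈ Set.Ici 0) zero_le_one
  simp only [φ, zero_smul, add_zero, one_smul, d, add_sub_cancel] at h01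
  linarith

theorem bddBelow_range_of_strongly_monotone_gradient {f : E → ℝ} {g : E → E} {m : ℝ}
    (hf : ∀ x, HasGradientAt f (g x) x) (hg : ∀ x y, m * ‖x - y‖ ^ 2 ≤ ⟪g x - g y, x - y⟫)
    (hm : 0 < m) : BddBelow (Set.range f) := by
  refine ⟨f 0 - ‖g 0‖ ^ 2 / (2 * m), Set.forall_mem_range.2 fun w => ?_⟩
  have hlow := lower_bound_of_strongly_monotone_gradient hf hg 0 w
  have hCS := neg_le_of_abs_le (abs_real_inner_le_norm (g 0) (w - 0))
  have hsq : ‖g 0‖ * ‖w - 0‖ - m / 2 * ‖w - 0‖ ^ 2 ≤ ‖g 0‖ ^ 2 / (2 * m) := by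
    rw [le_div_iff₀ (by positivity)]
    nlinarith [sq_nonneg (‖g 0‖ - m * ‖w - 0‖)]
  linarith

theorem norm_sub_sq_le_of_le_iInf_add {f : E → ℝ} {g : E → E} {m : ℝ}
    (hf : ∀ x, HasGradientAt f (g x) x) (hg : ∀ x y, m * ‖x - y‖ ^ 2 ≤ ⟪g x - g y, x - y⟫)
    (hm : 0 < m) {ε : ℝ} {ŵ : E} (hŵ : f ŵ ≤ (⨅ w, f w) + ε) (x : E) :
    ‖ŵ - x‖ ^ 2 ≤ 4 / m ^ 2 * ‖g x‖ ^ 2 + 4 * ε / m := by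
  have hlow := lower_bound_of_strongly_monotone_gradient hf hg x ŵ
  have hinf := ciInf_le (bddBelow_range_of_strongly_monotone_gradient hf hg hm) x
  have hCS := neg_le_of_abs_le (abs_real_inner_le_norm (g x) (ŵ - x))
  have hquad : m ^ 2 * ‖ŵ - x‖ ^ 2 ≤ 4 * ‖g x‖ ^ 2 + 4 * ε * m := by
    nlinarith [sq_nonneg (m * ‖ŵ - x‖ - 2 * ‖g x‖)]
  rw [div_mul_eq_mul_div, div_add_div _ _ (by positivity) hm.ne', le_div_iff₀ (by positivity)]
  nlinarith

theorem HasGradientAt.const_mul_sum {ι : Type*} (s : Finset ι) {f : ι → E → ℝ} {g : ι → E}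
    {x : E} (hf : ∀ i ∈ s, HasGradientAt (f i) (g i) x) (a : ℝ) :
    HasGradientAt (fun w => a * ∑ i ∈ s, f i w) (a • ∑ i ∈ s, g i) x := by
  simp only [hasGradientAt_iff_hasFDerivAt, map_smul, map_sum] at hf ⊢
  exact (HasFDerivAt.fun_sum hf).const_mul a

theorem HasGradientAt.add_sq_norm_sub_div {F : E → ℝ} {g x : E} (hF : HasGradientAt F g x)
    (η : ℝ) (w0 : E) :
    HasGradientAt (fun w => F w + ‖w - w0‖ ^ 2 / (2 * η)) (g + η⁻¹ • (x - w0)) x := by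
  rw [hasGradientAt_iff_hasFDerivAt] at hF ⊢
  have hsq : HasFDerivAt (fun w => ‖w - w0‖ ^ 2) (2 • innerSL ℝ (x - w0)) x := by
    simpa using ((hasFDerivAt_id x).sub_const w0).norm_sq
  refine (hF.add (hsq.mul_const (2 * η)⁻¹)).congr_fderiv ?_
  ext v
  simp only [mul_inv_rev, map_sub, add_apply, toDual_apply_apply, smul_apply, sub_apply,
    coe_innerSL_apply, nsmul_eq_mul, Nat.cast_ofNat, smul_eq_mul, map_add, map_smul, add_right_inj]
  ring

theorem norm_sub_sq_le_of_inexact_prox {F : E → ℝ} {gF : E → E} {L η ε : ℝ}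
    (hF : ∀ x, HasGradientAt F (gF x) x) (hgF : ∀ x y, ‖gF x - gF y‖ ≤ L * ‖x - y‖)
    (hm : 0 < η⁻¹ - L) {w0 ŵ : E}
    (hŵ : F ŵ + ‖ŵ - w0‖ ^ 2 / (2 * η) ≤ (⨅ w, F w + ‖w - w0‖ ^ 2 / (2 * η)) + ε) (x : E) :
    ‖ŵ - x‖ ^ 2 ≤ 4 / (η⁻¹ - L) ^ 2 * ‖gF x + η⁻¹ • (x - w0)‖ ^ 2 + 4 * ε / (η⁻¹ - L) :=
  norm_sub_sq_le_of_le_iInf_add (fun x => (hF x).add_sq_norm_sub_div η w0)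
    (strongly_monotone_add_smul_sub hgF η⁻¹ w0) hm hŵ x

theorem norm_sub_sq_le_of_inexact_avg_prox {n : ℕ} (hn : 0 < n) {f : Fin n → E → ℝ}
    {L η ε : ℝ} (hf : ∀ i, Differentiable ℝ (f i))
    (hsmooth : ∀ i x y, ‖gradient (f i) x - gradient (f i) y‖ ≤ L * ‖x - y‖)
    (hm : 0 < η⁻¹ - L) {w0 ŵ : E}
    (hŵ : (n : ℝ)⁻¹ * ∑ i, f i ŵ + ‖ŵ - w0‖ ^ 2 / (2 * η)
      ≤ (⨅ w, (n : ℝ)⁻¹ * ∑ i, f i w + ‖w - w0‖ ^ 2 / (2 * η)) + ε) (x : E) :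
    ‖ŵ - x‖ ^ 2 ≤ 4 / (η⁻¹ - L) ^ 2 * ‖(n : ℝ)⁻¹ • ∑ i, gradient (f i) x + η⁻¹ • (x - w0)‖ ^ 2
      + 4 * ε / (η⁻¹ - L) :=
  norm_sub_sq_le_of_inexact_prox
    (fun x => HasGradientAt.const_mul_sum univ (fun i _ => (hf i x).hasGradientAt) _)
    (fun x y => by
      rw [← smul_sub, ← sum_sub_distrib]
      exact norm_inv_smul_sum_le hn fun i => hsmooth i x y) hm hŵ x

theorem exists_prox_fixed_point {F : E → E} {L η : ℝ} (hF : ∀ x y, ‖F x - F y‖ ≤ L * ‖x - y‖)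
    (hη : 0 < η) (hηL : η * L < 1) (w0 : E) : ∃ x, F x + η⁻¹ • (x - w0) = 0 := by
  have hlip : LipschitzWith (η * L).toNNReal fun x => w0 - η • F x := by
    refine LipschitzWith.of_dist_le' fun x y => ?_
    rw [dist_eq_norm, dist_eq_norm, sub_sub_sub_cancel_left, ← smul_sub, norm_smul,
      Real.norm_of_nonneg hη.le, mul_assoc, norm_sub_rev]
    exact mul_le_mul_of_nonneg_left (hF x y) hη.le
  obtain ⟨x, hx, -⟩ := ContractingWith.exists_fixedPoint
    ⟨by simpa using hηL, hlip⟩ (0 : E) (edist_ne_top _ _)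
  have hx : x - w0 = -(η • F x) := by
    nth_rewrite 1 [← show w0 - η • F x = x from hx]
    abel
  exact ⟨x, by rw [hx, smul_neg, smul_smul, inv_mul_cancel₀ hη.ne', one_smul, add_neg_cancel]⟩

end ProximalPoint

section SecondMoments

variable {X E : Type*} [MeasurableSpace X] [NormedAddCommGroup E] [InnerProductSpace ℝ E]
  {ν μ : Measure X} [IsProbabilityMeasure μ]

theorem MeasureTheory.MemLp.integrable_inner {u v : X → E} (hu : MemLp u 2 ν) (hv : MemLp v 2 ν) :
    Integrable (fun x => ⟪u x, v x⟫) ν :=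
  (hu.norm.integrable_mul hv.norm).mono (hu.1.inner hv.1)
    (ae_of_all _ fun x => by simpa using abs_real_inner_le_norm (u x) (v x))

theorem integrable_norm_avg_sub_sq_pi {n : ℕ} {u : X → E} (hu : MemLp u 2 μ) (c : E) :
    Integrable (fun β => ‖(n : ℝ)⁻¹ • ∑ i, u (β i) - c‖ ^ 2) (Measure.pi fun _ : Fin n => μ) := by
  have hsum : MemLp (fun β : Fin n → X => ∑ i, u (β i)) 2 (Measure.pi fun _ : Fin n => μ) :=
    memLp_finsetSum univ fun i _ =>
      hu.comp_measurePreserving (measurePreserving_eval (fun _ : Fin n => μ) i)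
  exact ((hsum.const_smul _).sub (memLp_const c)).integrable_norm_pow two_ne_zero

variable [CompleteSpace E]

theorem integral_norm_sub_sq_eq [IsProbabilityMeasure ν] {f : X → E} (hf : MemLp f 2 ν) (c : E) :
    ∫ x, ‖f x - c‖ ^ 2 ∂ν = ∫ x, ‖f x - ∫ y, f y ∂ν‖ ^ 2 ∂ν + ‖(∫ y, f y ∂ν) - c‖ ^ 2 := by
  set m := ∫ y, f y ∂ν
  have hfm : MemLp (fun x => f x - m) 2 ν := hf.sub (memLp_const m)
  have hcross : ∫ x, ⟪f x - m, m - c⟫ ∂ν = 0 := by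
    simp_rw [real_inner_comm (m - c)]
    rw [integral_inner (hfm.integrable one_le_two), integral_sub (hf.integrable one_le_two)
      (integrable_const m)]
    simp [m]
  have h1 : Integrable (fun x => ‖f x - m‖ ^ 2) ν := hfm.integrable_norm_pow two_ne_zero
  have h2 : Integrable (fun x => 2 * ⟪f x - m, m - c⟫) ν :=
    (hfm.integrable_inner (memLp_const _)).const_mul 2
  calc ∫ x, ‖f x - c‖ ^ 2 ∂ν
      = ∫ x, (‖f x - m‖ ^ 2 + 2 * ⟪f x - m, m - c⟫ + ‖m - c‖ ^ 2) ∂ν := by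
        simp_rw [← norm_add_sq_real, sub_add_sub_cancel]
    _ = ∫ x, ‖f x - m‖ ^ 2 ∂ν + ‖m - c‖ ^ 2 := by
        rw [integral_add (h1.add h2 : Integrable (fun x => _ + _) ν) (integrable_const _),
          integral_add h1 h2, integral_const_mul, hcross]
        simp

theorem integral_norm_sub_integral_sq_le [IsProbabilityMeasure ν] {f : X → E}
    (hf : MemLp f 2 ν) (c : E) :
    ∫ x, ‖f x - ∫ y, f y ∂ν‖ ^ 2 ∂ν ≤ ∫ x, ‖f x - c‖ ^ 2 ∂ν := by
  rw [integral_norm_sub_sq_eq hf c]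
  exact le_add_of_nonneg_right (sq_nonneg _)

theorem integral_norm_sum_sq_pi {ι : Type*} [Fintype ι] {h : X → E} (hh : MemLp h 2 μ)
    (h0 : ∫ x, h x ∂μ = 0) :
    ∫ β, ‖∑ i, h (β i)‖ ^ 2 ∂(Measure.pi fun _ : ι => μ) = Fintype.card ι * ∫ x, ‖h x‖ ^ 2 ∂μ := by
  classical
  set π := Measure.pi fun _ : ι => μ
  have hcoord (i : ι) : MemLp (fun β : ι → X => h (β i)) 2 π :=
    hh.comp_measurePreserving (measurePreserving_eval (fun _ : ι => μ) i)
  have hpair (i j : ι) :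
      ∫ β, ⟪h (β i), h (β j)⟫ ∂π = if i = j then ∫ x, ‖h x‖ ^ 2 ∂μ else 0 := by
    split_ifs with hij
    · subst hij
      simp_rw [real_inner_self_eq_norm_sq]
      exact integral_comp_eval (μ := fun _ : ι => μ) (hh.integrable_norm_pow two_ne_zero).1
    · have hind : IndepFun (fun β : ι → X => β i) (fun β => β j) π :=
        (iIndepFun_pi (X := fun _ => id) fun _ => aemeasurable_id).indepFun hij
      have hmap (k : ι) : π.map (fun β => β k) = μ :=
        (measurePreserving_eval (fun _ : ι => μ) k).map_eq
      have hh1 (k : ι) : Integrable h (π.map fun β => β k) := by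
        rw [hmap]; exact hh.integrable one_le_two
      have hprod : ∫ β, ⟪h (β i), h (β j)⟫ ∂π = ⟪∫ β, h (β i) ∂π, ∫ β, h (β j) ∂π⟫ :=
        hind.integral_bilin_comp_comp (measurable_pi_apply i).aemeasurable
          (measurable_pi_apply j).aemeasurable (hh1 i) (hh1 j) (innerSL ℝ)
      rw [hprod, integral_comp_eval (μ := fun _ : ι => μ) hh.1, h0, inner_zero_left]
  have hint (i j : ι) : Integrable (fun β => ⟪h (β i), h (β j)⟫) π :=
    (hcoord i).integrable_inner (hcoord j)
  calc ∫ β, ‖∑ i, h (β i)‖ ^ 2 ∂π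
      = ∫ β, ∑ i, ∑ j, ⟪h (β i), h (β j)⟫ ∂π := by
        simp_rw [← real_inner_self_eq_norm_sq, sum_inner, inner_sum]
    _ = ∑ i, ∑ j, ∫ β, ⟪h (β i), h (β j)⟫ ∂π := by
        rw [integral_finsetSum _ fun i _ => integrable_finsetSum _ fun j _ => hint i j]
        exact sum_congr rfl fun i _ => integral_finsetSum _ fun j _ => hint i j
    _ = Fintype.card ι * ∫ x, ‖h x‖ ^ 2 ∂μ := by
        simp [hpair]

theorem integral_norm_avg_sub_integral_sq_pi {n : ℕ} (hn : 0 < n) {u : X → E}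
    (hu : MemLp u 2 μ) :
    ∫ β, ‖(n : ℝ)⁻¹ • ∑ i, u (β i) - ∫ x, u x ∂μ‖ ^ 2 ∂(Measure.pi fun _ : Fin n => μ)
      = (n : ℝ)⁻¹ * ∫ x, ‖u x - ∫ y, u y ∂μ‖ ^ 2 ∂μ := by
  set m := ∫ x, u x ∂μ
  have hcenter (β : Fin n → X) :
      (n : ℝ)⁻¹ • ∑ i, u (β i) - m = (n : ℝ)⁻¹ • ∑ i, (u (β i) - m) := by
    rw [sum_sub_distrib, sum_const, card_univ, Fintype.card_fin, smul_sub,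
      ← Nat.cast_smul_eq_nsmul ℝ, smul_smul, inv_mul_cancel₀ (by positivity), one_smul]
  have hmean : ∫ x, (u x - m) ∂μ = 0 := by
    rw [integral_sub (hu.integrable one_le_two) (integrable_const m)]
    simp [m]
  simp_rw [hcenter, norm_smul, mul_pow, integral_const_mul,
    integral_norm_sum_sq_pi (h := fun x => u x - m) (hu.sub (memLp_const m)) hmean]
  rw [norm_inv, Real.norm_natCast, Fintype.card_fin]
  field_simp

theorem integral_norm_avg_sub_integral_sq_pi_le {n : ℕ} (hn : 0 < n) {u : X → E}
    (hu : AEStronglyMeasurable u μ) {C : ℝ} (hC : ∀ x, ‖u x‖ ≤ C) :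
    ∫ β, ‖(n : ℝ)⁻¹ • ∑ i, u (β i) - ∫ x, u x ∂μ‖ ^ 2 ∂(Measure.pi fun _ : Fin n => μ)
      ≤ C ^ 2 / n := by
  have hu2 : MemLp u 2 μ := .of_bound hu C (ae_of_all _ hC)
  have hsecond : ∫ x, ‖u x - 0‖ ^ 2 ∂μ ≤ C ^ 2 := by
    simp_rw [sub_zero]
    calc ∫ x, ‖u x‖ ^ 2 ∂μ ≤ ∫ _, C ^ 2 ∂μ :=
          integral_mono_of_nonneg (ae_of_all _ fun _ => by positivity) (integrable_const _)
            (ae_of_all _ fun x => pow_le_pow_left₀ (norm_nonneg _) (hC x) 2)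
      _ = C ^ 2 := by simp
  rw [integral_norm_avg_sub_integral_sq_pi hn hu2, inv_mul_eq_div]
  gcongr
  exact (integral_norm_sub_integral_sq_le hu2 0).trans hsecond

theorem integral_norm_sub_integral_sq_le_of_le_avg {n : ℕ} (hn : 0 < n)
    {D : (Fin n → X) → E} (hD : MemLp D 2 (Measure.pi fun _ : Fin n => μ)) {u : X → E}
    (hu : AEStronglyMeasurable u μ) {C : ℝ} (hC : ∀ x, ‖u x‖ ≤ C) {a e : ℝ} (ha : 0 ≤ a) (c : E)
    (h : ∀ β, ‖D β - c‖ ^ 2 ≤ a * ‖(n : ℝ)⁻¹ • ∑ i, u (β i) - ∫ x, u x ∂μ‖ ^ 2 + e) :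
    ∫ β, ‖D β - ∫ β', D β' ∂(Measure.pi fun _ : Fin n => μ)‖ ^ 2 ∂(Measure.pi fun _ : Fin n => μ)
      ≤ a * (C ^ 2 / n) + e := by
  set π := Measure.pi fun _ : Fin n => μ
  have hS := integrable_norm_avg_sub_sq_pi (n := n) (.of_bound hu C (ae_of_all _ hC)) (∫ x, u x ∂μ)
  calc _ ≤ ∫ β, ‖D β - c‖ ^ 2 ∂π := integral_norm_sub_integral_sq_le hD c
    _ ≤ ∫ β, (a * ‖(n : ℝ)⁻¹ • ∑ i, u (β i) - ∫ x, u x ∂μ‖ ^ 2 + e) ∂π :=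
        integral_mono_of_nonneg (ae_of_all _ fun _ => sq_nonneg _)
          ((hS.const_mul a).add (integrable_const e)) (ae_of_all _ h)
    _ = a * ∫ β, ‖(n : ℝ)⁻¹ • ∑ i, u (β i) - ∫ x, u x ∂μ‖ ^ 2 ∂π + e := by
        rw [integral_add (hS.const_mul a) (integrable_const e), integral_const_mul]
        simp [π]
    _ ≤ a * (C ^ 2 / n) + e := by
        gcongr
        exact integral_norm_avg_sub_integral_sq_pi_le hn hu hC

end SecondMoments

section ParametricGradient

variable {X E : Type*} [MeasurableSpace X] [NormedAddCommGroup E]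

theorem measurable_fderiv_apply_of_differentiable [NormedSpace ℝ E] {f : E → X → ℝ}
    (hf : ∀ w, Measurable (f w)) (hd : ∀ x, Differentiable ℝ (f · x)) (w v : E) :
    Measurable fun x => fderiv ℝ (f · x) w v :=
  measurable_of_tendsto_metrizable
    (f := fun (n : ℕ) x => (n : ℝ) • (f (w + (n : ℝ)⁻¹ • v) x - f w x)) (fun n => by fun_prop)
    (tendsto_pi_nhds.2 fun x => (hd x w).hasFDerivAt.lim v
      (by simpa using tendsto_natCast_atTop_atTop))

theorem norm_integral_sub_integral_le [NormedSpace ℝ E] {μ : Measure X} [IsProbabilityMeasure μ]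
    {u v : X → E} (hu : Integrable u μ) (hv : Integrable v μ) {C : ℝ}
    (h : ∀ x, ‖u x - v x‖ ≤ C) : ‖∫ x, u x ∂μ - ∫ x, v x ∂μ‖ ≤ C := by
  rw [← integral_sub hu hv]
  simpa using norm_integral_le_of_norm_le_const (μ := μ) (ae_of_all _ h)

variable [InnerProductSpace ℝ E] [CompleteSpace E]

theorem measurable_gradient_of_differentiable [FiniteDimensional ℝ E] [MeasurableSpace E]
    [BorelSpace E] {f : E → X → ℝ} (hf : ∀ w, Measurable (f w))
    (hd : ∀ x, Differentiable ℝ (f · x)) (w : E) :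
    Measurable fun x => gradient (f · x) w := by
  let b := stdOrthonormalBasis ℝ E
  have hexpand : (fun x => gradient (f · x) w)
      = fun x => ∑ k, fderiv ℝ (f · x) w (b k) • b k := by
    ext1 x
    simp_rw [← inner_gradient_left, real_inner_comm (b _)]
    exact (b.sum_repr' _).symm
  rw [hexpand]
  exact Finset.measurable_sum _ fun k _ =>
    (measurable_fderiv_apply_of_differentiable hf hd w (b k)).smul_const _

theorem norm_gradient_le_of_lipschitz {f : E → ℝ} {G : ℝ} (hG : 0 ≤ G)
    (hf : ∀ w w', |f w - f w'| ≤ G * ‖w - w'‖) (x : E) : ‖gradient f x‖ ≤ G := by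
  rw [← (toDual ℝ E).norm_map, toDual_gradient]
  exact norm_fderiv_le_of_lip' ℝ hG (.of_forall fun w => hf w x)

theorem hasGradientAt_integral_of_norm_gradient_le {μ : Measure X} [IsFiniteMeasure μ]
    {f : E → X → ℝ} {G : ℝ} (hf : ∀ w, AEStronglyMeasurable (f w) μ)
    (hd : ∀ x, Differentiable ℝ (f · x)) (hG : ∀ x w, ‖gradient (f · x) w‖ ≤ G) {w : E}
    (hgm : AEStronglyMeasurable (fun x => gradient (f · x) w) μ) (hint : Integrable (f w) μ) :
    HasGradientAt (fun w => ∫ x, f w x ∂μ) (∫ x, gradient (f · x) w ∂μ) w := by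
  have hderiv := hasFDerivAt_integral_of_dominated_of_fderiv_le
    (F' := fun w x => toDual ℝ E (gradient (f · x) w)) (bound := fun _ => G) (μ := μ)
    Filter.univ_mem (.of_forall hf) hint
    ((toDual ℝ E).continuous.comp_aestronglyMeasurable hgm)
    (ae_of_all _ fun x w _ => by rw [LinearIsometryEquiv.norm_map]; exact hG x w)
    (integrable_const G)
    (ae_of_all _ fun x w _ => (hd x w).hasGradientAt)
  have hcomm : ∫ x, toDual ℝ E (gradient (f · x) w) ∂μ
      = toDual ℝ E (∫ x, gradient (f · x) w ∂μ) :=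
    (toDual ℝ E).toLinearIsometry.integral_comp_comm _
  rwa [hasGradientAt_iff_hasFDerivAt, ← hcomm]

end ParametricGradient

theorem prox_variance_bound_arith {G L η ε : ℝ} {n : ℕ} (hn : 1 ≤ n) (hL : 0 ≤ L) (hη : 0 < η)
    (hηL : η * L < 1) (hε : ε ≤ G ^ 2 * η / (8 * n ^ 2)) :
    L ^ 2 * (4 / (η⁻¹ - L) ^ 2) * (G ^ 2 / n) + L ^ 2 * (4 * ε / (η⁻¹ - L))
      ≤ 25 * L ^ 2 * G ^ 2 * η ^ 2 / ((1 - η * L) ^ 2 * n) := by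
  have hA : 0 < 1 - η * L := by linarith
  have hn' : (1 : ℝ) ≤ n := by exact_mod_cast hn
  have hε' : ε * (8 * n ^ 2) ≤ G ^ 2 * η := (le_div_iff₀ (by positivity)).mp hε
  have hcross : 4 * ε * η * ((1 - η * L) * n) ≤ 21 * G ^ 2 * η ^ 2 := by
    rcases le_or_gt 0 ε with hε0 | hε0
    · have hAn : (1 - η * L) * n ≤ n ^ 2 := by nlinarith [mul_nonneg hη.le hL]
      nlinarith [mul_le_mul_of_nonneg_left hAn (by positivity : 0 ≤ 4 * ε * η)]
    · nlinarith [mul_pos (mul_pos hη hA) (by positivity : (0 : ℝ) < n)]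
  have hm : η⁻¹ - L = (1 - η * L) / η := by field_simp
  have hexpand : L ^ 2 * (4 / ((1 - η * L) / η) ^ 2) * (G ^ 2 / n)
        + L ^ 2 * (4 * ε / ((1 - η * L) / η))
      = L ^ 2 * (4 * G ^ 2 * η ^ 2 + 4 * ε * η * ((1 - η * L) * n)) / ((1 - η * L) ^ 2 * n) := by
    field_simp
  rw [hm, hexpand]
  refine div_le_div_of_nonneg_right ?_ (by positivity)
  nlinarith [mul_le_mul_of_nonneg_left hcross (sq_nonneg L)]

theorem minibatch_prox_gradient_variance_bound_general
    {Z : Type*} [MeasurableSpace Z] (p b : ℕ) (hb : 1 ≤ b)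
    (μ : Measure Z) [IsProbabilityMeasure μ]
    (G L η ε : ℝ) (hG : 0 ≤ G) (hL : 0 < L)
    (hη0 : 0 < η) (hηL : η < 1 / L)
    (hε : ε ≤ G ^ 2 * η / (8 * b ^ 2))
    (ℓ : EuclideanSpace ℝ (Fin p) → Z → ℝ)
    (hmeas : Measurable (Function.uncurry ℓ))
    (hlip : ∀ z w w', |ℓ w z - ℓ w' z| ≤ G * ‖w - w'‖)
    (hdiff : ∀ z, Differentiable ℝ (fun w => ℓ w z))
    (hsmooth : ∀ z w w',
      ‖gradient (fun w => ℓ w z) w - gradient (fun w => ℓ w z) w'‖ ≤ L * ‖w - w'‖)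
    (hint : ∀ w, Integrable (fun z => ℓ w z) μ)
    (R : EuclideanSpace ℝ (Fin p) → ℝ) (hR : ∀ w, R w = ∫ z, ℓ w z ∂μ)
    (w0 : EuclideanSpace ℝ (Fin p))
    (wB : (Fin b → Z) → EuclideanSpace ℝ (Fin p)) (hwBmeas : Measurable wB)
    (hinexact : ∀ β : Fin b → Z,
      ((b : ℝ)⁻¹ * ∑ i, ℓ (wB β) (β i)) + ‖wB β - w0‖ ^ 2 / (2 * η)
        ≤ (⨅ w, ((b : ℝ)⁻¹ * ∑ i, ℓ w (β i)) + ‖w - w0‖ ^ 2 / (2 * η)) + ε) :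
    ∫ β, ‖gradient R (wB β)
        - ∫ β', gradient R (wB β') ∂(Measure.pi fun _ : Fin b => μ)‖ ^ 2
        ∂(Measure.pi fun _ : Fin b => μ)
      ≤ 25 * L ^ 2 * G ^ 2 * η ^ 2 / ((1 - η * L) ^ 2 * b) := by
  have hηL' : η * L < 1 := by rw [lt_div_iff₀ hL] at hηL; linarith
  have hm : 0 < η⁻¹ - L := by rw [sub_pos, ← one_div, lt_div_iff₀ hη0]; linarith
  have hg_meas (w) : Measurable fun z => gradient (fun w => ℓ w z) w :=
    measurable_gradient_of_differentiable (fun _ => hmeas.of_uncurry_left) hdiff w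
  have hg_norm (z w) : ‖gradient (fun w => ℓ w z) w‖ ≤ G :=
    norm_gradient_le_of_lipschitz hG (hlip z) w
  have hg_int (w) : Integrable (fun z => gradient (fun w => ℓ w z) w) μ :=
    .of_bound (hg_meas w).aestronglyMeasurable G (ae_of_all _ (hg_norm · w))
  have hR_grad (w) : gradient R w = ∫ z, gradient (fun w => ℓ w z) w ∂μ := by
    rw [show R = fun w => ∫ z, ℓ w z ∂μ from funext hR]
    exact (hasGradientAt_integral_of_norm_gradient_le
      (fun _ => hmeas.of_uncurry_left.aestronglyMeasurable) hdiff hg_norm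
      (hg_meas w).aestronglyMeasurable (hint w)).gradient
  have hR_norm (w) : ‖gradient R w‖ ≤ G := by
    simpa [hR_grad] using norm_integral_le_of_norm_le_const (μ := μ) (ae_of_all _ (hg_norm · w))
  have hR_lip (x y) : ‖gradient R x - gradient R y‖ ≤ L * ‖x - y‖ := by
    rw [hR_grad, hR_grad]
    exact norm_integral_sub_integral_le (hg_int x) (hg_int y) (hsmooth · x y)
  obtain ⟨wbar, hwbar⟩ := exists_prox_fixed_point hR_lip hη0 hηL' w0
  have hclose (β : Fin b → Z) : ‖gradient R (wB β) - gradient R wbar‖ ^ 2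
      ≤ L ^ 2 * (4 / (η⁻¹ - L) ^ 2) * ‖(b : ℝ)⁻¹ • ∑ i, gradient (fun w => ℓ w (β i)) wbar
          - ∫ z, gradient (fun w => ℓ w z) wbar ∂μ‖ ^ 2 + L ^ 2 * (4 * ε / (η⁻¹ - L)) := by
    have hprox := norm_sub_sq_le_of_inexact_avg_prox hb (f := fun i w => ℓ w (β i))
      (fun i => hdiff (β i)) (fun i => hsmooth (β i)) hm (hinexact β) wbar
    rw [eq_neg_of_add_eq_zero_right hwbar, ← sub_eq_add_neg, hR_grad] at hprox
    calc ‖gradient R (wB β) - gradient R wbar‖ ^ 2 ≤ (L * ‖wB β - wbar‖) ^ 2 :=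
          pow_le_pow_left₀ (norm_nonneg _) (hR_lip _ _) 2
      _ ≤ _ := by rw [mul_pow, mul_assoc, ← mul_add]; gcongr
  have hR_cont : Continuous (gradient R) :=
    (LipschitzWith.of_dist_le' (K := L) fun x y => by
      simpa [dist_eq_norm] using hR_lip x y).continuous
  have hD : MemLp (fun β => gradient R (wB β)) 2 (Measure.pi fun _ : Fin b => μ) :=
    .of_bound (hR_cont.measurable.comp hwBmeas).aestronglyMeasurable G
      (ae_of_all _ (hR_norm <| wB ·))
  exact (integral_norm_sub_integral_sq_le_of_le_avg hb hD (hg_meas wbar).aestronglyMeasurable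
    (hg_norm · wbar) (by positivity) _ hclose).trans
    (prox_variance_bound_arith hb hL.le hη0 hηL' hε)

/-- Second-moment gradient bound for the minibatch stochastic proximal point
oracle: with a `G`-Lipschitz, `L`-smooth loss, `0 < η < 1/L`, `0 ≤ ε ≤ G²η/(8b²)`, and `w_B` a
measurable selection of `ε`-inexact minimizers of `w ↦ R_B(w) + ‖w − w₀‖²/(2η)` over an i.i.d.
minibatch `B ∼ 𝒟^b`, one has `E_B‖∇R(w_B) − E_B[∇R(w_B)]‖² ≤ 25L²G²η²/((1 − ηL)²b)`. -/
theorem minibatch_prox_gradient_variance_bound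
    {Z : Type*} [MeasurableSpace Z] (p b : ℕ) (hb : 1 ≤ b)
    (μ : Measure Z) [IsProbabilityMeasure μ]
    (G L η ε : ℝ) (hG : 0 ≤ G) (hL : 0 < L)
    (hη0 : 0 < η) (hηL : η < 1 / L)
    (hε0 : 0 ≤ ε) (hε : ε ≤ G ^ 2 * η / (8 * b ^ 2))
    (ℓ : EuclideanSpace ℝ (Fin p) → Z → ℝ)
    (hmeas : Measurable (Function.uncurry ℓ))
    (hlip : ∀ z w w', |ℓ w z - ℓ w' z| ≤ G * ‖w - w'‖)
    (hdiff : ∀ z, Differentiable ℝ (fun w => ℓ w z))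
    (hsmooth : ∀ z w w',
      ‖gradient (fun w => ℓ w z) w - gradient (fun w => ℓ w z) w'‖ ≤ L * ‖w - w'‖)
    (hint : ∀ w, Integrable (fun z => ℓ w z) μ)
    (R : EuclideanSpace ℝ (Fin p) → ℝ) (hR : ∀ w, R w = ∫ z, ℓ w z ∂μ)
    (w0 : EuclideanSpace ℝ (Fin p))
    (wB : (Fin b → Z) → EuclideanSpace ℝ (Fin p)) (hwBmeas : Measurable wB)
    (hinexact : ∀ β : Fin b → Z,
      ((b : ℝ)⁻¹ * ∑ i, ℓ (wB β) (β i)) + ‖wB β - w0‖ ^ 2 / (2 * η)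
        ≤ (⨅ w, ((b : ℝ)⁻¹ * ∑ i, ℓ w (β i)) + ‖w - w0‖ ^ 2 / (2 * η)) + ε) :
    ∫ β, ‖gradient R (wB β)
        - ∫ β', gradient R (wB β') ∂(Measure.pi fun _ : Fin b => μ)‖ ^ 2
        ∂(Measure.pi fun _ : Fin b => μ)
      ≤ 25 * L ^ 2 * G ^ 2 * η ^ 2 / ((1 - η * L) ^ 2 * b) :=
  minibatch_prox_gradient_variance_bound_general p b hb μ G L η ε hG hL hη0 hηL hε ℓ hmeas hlip
    hdiff hsmooth hint R hR w0 wB hwBmeas hinexact
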